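/- arXiv:2602.05869 — 2 statements merged into one kernel-verified Lean document; each statement's English description precedes it below -/
import Mathlib

section
/- Let A ∈ ℝ^{n×r} have columns that are unit vectors a_1, …, a_r with ‖a_i‖_∞^2 ≤ μ/n for all i, and suppose the Gram matrix G = A^T A satisfies λ_min(G) ≥ 1/2. Then the matrix U = A G^{−1/2} has orthonormal columns spanning the column space of A, and ‖U‖_{2,∞}^2 ≤ 2μr/n. -/
/-!
Since `R (R G) = 1`, also `(R G) R = 1`, so `U = A R` satisfies `UᵀU = R G R = 1`, and `R` is
invertible, so `U` and `A` have the same column space. For the row bound write row `t` of `U` as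
`R v` with `v` row `t` of `A`: from `G ⪰ ½` we get `½ ‖R v‖² ≤ (R v)ᵀ G (R v) = vᵀ (R G R) v = ‖v‖²`,
and `‖v‖² ≤ r μ / n` since every `v_i² ≤ μ / n`.
-/

open scoped Matrix

namespace Matrix

variable {l m ι : Type*} [Fintype m] [Fintype ι]

theorem range_mulVecLin_mul_of_mul_eq_one {R : Type*} [CommSemiring R] [DecidableEq ι]
    (A : Matrix l ι R) {B C : Matrix ι ι R} (h : B * C = 1) :
    LinearMap.range (A * B).mulVecLin = LinearMap.range A.mulVecLin := by
  refine mulVecLin_mul A B ▸ LinearMap.range_comp_of_range_eq_top _ ?_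
  exact LinearMap.range_eq_top.mpr fun w => ⟨C *ᵥ w, by simp [mulVec_mulVec, h]⟩

theorem transpose_mul_self_of_mul_gram_mul_eq_one {R : Type*} [CommSemiring R] [DecidableEq ι]
    {A : Matrix m ι R} {B : Matrix ι ι R} (hB : Bᵀ = B) (h : B * (Aᵀ * A) * B = 1) :
    (A * B)ᵀ * (A * B) = 1 := by
  rw [transpose_mul, hB, ← h]
  simp only [Matrix.mul_assoc]

theorem mul_dotProduct_mulVec_self_le [DecidableEq ι] {c : ℝ} {G R : Matrix ι ι ℝ}
    (hG : (G - c • 1).PosSemidef) (hR : Rᵀ = R) (hRGR : R * G * R = 1) (v : ι → ℝ) :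
    c * (R *ᵥ v ⬝ᵥ R *ᵥ v) ≤ v ⬝ᵥ v := by
  have hquad : R *ᵥ v ⬝ᵥ G *ᵥ (R *ᵥ v) = v ⬝ᵥ v := by
    rw [dotProduct_comm, dotProduct_mulVec, ← mulVec_transpose, hR, mulVec_mulVec,
      mulVec_mulVec, hRGR, one_mulVec]
  have hpsd := hG.dotProduct_mulVec_nonneg (R *ᵥ v)
  simp only [star_trivial, sub_mulVec, smul_mulVec, one_mulVec, dotProduct_sub,
    dotProduct_smul, smul_eq_mul, hquad] at hpsd
  linarith

end Matrix

open Matrix in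
theorem orthonormalize_incoherent_general {n r : ℕ} (μ : ℝ)
    (A : Matrix (Fin n) (Fin r) ℝ)
    (hinf : ∀ i t, (A t i) ^ 2 ≤ μ / n)
    (hG : ((A.transpose * A) - ((1 / 2 : ℝ) • (1 : Matrix (Fin r) (Fin r) ℝ))).PosSemidef)
    (R : Matrix (Fin r) (Fin r) ℝ)
    (hR : R.PosSemidef)
    (hRsq : R * R * (A.transpose * A) = 1) :
    ((A * R).transpose * (A * R) = 1) ∧
    LinearMap.range (A * R).mulVecLin = LinearMap.range A.mulVecLin ∧
    ∀ t, ∑ i, ((A * R) t i) ^ 2 ≤ 2 * μ * r / n := by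
  have hRT : Rᵀ = R := hR.isHermitian
  have hRinv : R * (R * (Aᵀ * A)) = 1 := by rwa [← Matrix.mul_assoc]
  have hRGR : R * (Aᵀ * A) * R = 1 := mul_eq_one_comm.mp hRinv
  refine ⟨transpose_mul_self_of_mul_gram_mul_eq_one hRT hRGR,
    range_mulVecLin_mul_of_mul_eq_one A hRinv, fun t => ?_⟩
  have hrow : (A * R) t = R *ᵥ A t := by
    rw [mul_apply_eq_vecMul, ← hRT, vecMul_transpose, hRT]
  have hsq (v : Fin r → ℝ) : v ⬝ᵥ v = ∑ i, v i ^ 2 := by simp [dotProduct, sq]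
  have hrowA : A t ⬝ᵥ A t ≤ r * (μ / n) := by
    simpa [hsq] using Finset.sum_le_sum fun i (_ : i ∈ Finset.univ) => hinf i t
  calc ∑ i, ((A * R) t i) ^ 2 = R *ᵥ A t ⬝ᵥ R *ᵥ A t := by rw [hrow, hsq]
    _ ≤ 2 * (A t ⬝ᵥ A t) := by linarith [mul_dotProduct_mulVec_self_le hG hRT hRGR (A t)]
    _ ≤ 2 * (r * (μ / n)) := by linarith
    _ = 2 * μ * r / n := by ring

/-- Orthonormalization preserves incoherence: if the columns of `A` are unit vectors with
`‖a_i‖_∞² ≤ μ/n`, the Gram matrix `G = AᵀA` satisfies `λ_min(G) ≥ 1/2`, and `R` is the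
(positive semidefinite) inverse square root of `G` (i.e. `R² G = 1`), then `U = A R` has
orthonormal columns spanning the column space of `A` and `‖U‖_{2,∞}² ≤ 2μr/n`. -/
theorem orthonormalize_incoherent {n r : ℕ} (μ : ℝ) (hn : 0 < n)
    (A : Matrix (Fin n) (Fin r) ℝ)
    (hunit : ∀ i, ∑ t, (A t i) ^ 2 = 1)
    (hinf : ∀ i t, (A t i) ^ 2 ≤ μ / n)
    (hG : ((A.transpose * A) - ((1 / 2 : ℝ) • (1 : Matrix (Fin r) (Fin r) ℝ))).PosSemidef)
    (R : Matrix (Fin r) (Fin r) ℝ)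
    (hR : R.PosSemidef)
    (hRsq : R * R * (A.transpose * A) = 1) :
    ((A * R).transpose * (A * R) = 1) ∧
    LinearMap.range (A * R).mulVecLin = LinearMap.range A.mulVecLin ∧
    ∀ t, ∑ i, ((A * R) t i) ^ 2 ≤ 2 * μ * r / n :=
  orthonormalize_incoherent_general μ A hinf hG R hR hRsq
end

section
/- Let T be an order-k tensor and Q^{(1)}, …, Q^{(k)} orthogonal projection matrices, Q^{(j)} of size n_j × n_j. Define T* = T ×_1 Q^{(1)} ×_2 ⋯ ×_k Q^{(k)}. Then ‖T − T*‖_F ≤ Σ_{j=1}^k ‖(I − Q^{(j)}) unfold_j(T)‖_F. -/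
/-!
The multi-mode product `T ×₁ A₁ ⋯ ×ₖ Aₖ` is the matrix–vector product of the Kronecker product
`⊗ⱼ Aⱼ` with `T`, and `A ↦ ⊗ⱼ Aⱼ` is multiplicative. Writing `P_S` for the product over the modes
in `S` (the identity elsewhere) and `Mⱼ` for the product in mode `j` alone,
`T - P_{S ∪ {j}} T = (T - Mⱼ T) + Mⱼ (T - P_S T)`. On each mode-`j` fibre `Mⱼ` acts as the
orthogonal projection `Q⁽ʲ⁾`, so it is a Frobenius contraction, and induction on `S` gives the
bound. Finally `unfoldⱼ (T - Mⱼ T) = (1 - Q⁽ʲ⁾) unfoldⱼ T`.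
-/

/-- The mode-`j` unfolding of an order-`k` tensor: rows indexed by mode `j`,
columns indexed by the remaining modes. -/
noncomputable def unfoldAux {k : ℕ} (n : Fin k → ℕ)
    (T : ((j : Fin k) → Fin (n j)) → ℝ) (j : Fin k) :
    Matrix (Fin (n j)) ((l : {l : Fin k // l ≠ j}) → Fin (n l.1)) ℝ :=
  fun i c => T (fun l => if h : l = j then Fin.cast (congrArg n h).symm i else c ⟨l, h⟩)

open Finset Matrix

theorem piecewise_insert_one_eq_mulSingle_mul {ι : Type*} [DecidableEq ι] {M : ι → Type*}
    [∀ i, MulOneClass (M i)] (f : ∀ i, M i) {S : Finset ι} {j : ι} (hj : j ∉ S) :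
    (insert j S).piecewise f 1 = fun i => Pi.mulSingle j (f j) i * S.piecewise f 1 i := by
  funext i
  by_cases hij : i = j
  · subst hij
    simp [hj]
  · simp [hij]

namespace Matrix

variable {ι R : Type*} [Fintype ι]

def kroneckerPi [CommMonoid R] {l m : ι → Type*} (A : ∀ i, Matrix (l i) (m i) R) :
    Matrix (∀ i, l i) (∀ i, m i) R :=
  fun x y => ∏ i, A i (x i) (y i)

variable [CommSemiring R]

theorem kroneckerPi_one {m : ι → Type*} [∀ i, DecidableEq (m i)] :
    kroneckerPi (1 : ∀ i, Matrix (m i) (m i) R) = 1 := by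
  ext x y
  simp only [kroneckerPi, Pi.one_apply, one_apply, Fintype.prod_boole, funext_iff]

theorem kroneckerPi_mul [DecidableEq ι] {l m n : ι → Type*} [∀ i, Fintype (m i)]
    (A : ∀ i, Matrix (l i) (m i) R) (B : ∀ i, Matrix (m i) (n i) R) :
    kroneckerPi (fun i => A i * B i) = kroneckerPi A * kroneckerPi B := by
  ext x z
  simp only [kroneckerPi, mul_apply, Fintype.prod_sum, ← Finset.prod_mul_distrib]

theorem kroneckerPi_mulSingle_piSplitAt_symm [DecidableEq ι] {m : ι → Type*}
    [∀ i, DecidableEq (m i)] (j : ι) (B : Matrix (m j) (m j) R) (x y : m j)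
    (c d : ∀ i : {i // i ≠ j}, m i) :
    kroneckerPi (Pi.mulSingle j B) ((Equiv.piSplitAt j m).symm (x, c))
        ((Equiv.piSplitAt j m).symm (y, d)) = B x y * (1 : Matrix _ _ R) c d := by
  rw [kroneckerPi, Fintype.prod_eq_mul_prod_subtype_ne _ j, ← kroneckerPi_one (R := R)]
  congr 1
  · simp
  · refine Finset.prod_congr rfl fun i _ => ?_
    simp [i.2]

end Matrix

section ModeUnfold

variable {ι R : Type*} [DecidableEq ι] {κ : ι → Type*}

def modeUnfold (j : ι) (T : (∀ i, κ i) → R) : Matrix (κ j) (∀ i : {i // i ≠ j}, κ i) R :=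
  fun x c => T ((Equiv.piSplitAt j κ).symm (x, c))

theorem modeUnfold_sub [Sub R] (j : ι) (T U : (∀ i, κ i) → R) :
    modeUnfold j (T - U) = modeUnfold j T - modeUnfold j U :=
  rfl

theorem sum_sq_modeUnfold [Fintype ι] [∀ i, Fintype (κ i)] [CommSemiring R] (j : ι)
    (T : (∀ i, κ i) → R) :
    ∑ x, ∑ c, modeUnfold j T x c ^ 2 = ∑ b, T b ^ 2 := by
  rw [← (Equiv.piSplitAt j κ).symm.sum_comp, Fintype.sum_prod_type]
  rfl

theorem modeUnfold_kroneckerPi_mulSingle_mulVec [Fintype ι] [∀ i, Fintype (κ i)]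
    [∀ i, DecidableEq (κ i)] [CommSemiring R] (j : ι) (B : Matrix (κ j) (κ j) R)
    (T : (∀ i, κ i) → R) :
    modeUnfold j (kroneckerPi (Pi.mulSingle j B) *ᵥ T) = B * modeUnfold j T := by
  ext x c
  simp only [modeUnfold, mulVec, dotProduct, mul_apply]
  rw [← (Equiv.piSplitAt j κ).symm.sum_comp, Fintype.sum_prod_type]
  simp [kroneckerPi_mulSingle_piSplitAt_symm, one_apply]

end ModeUnfold

theorem unfoldAux_eq_modeUnfold {k : ℕ} (n : Fin k → ℕ) (T : ((j : Fin k) → Fin (n j)) → ℝ)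
    (j : Fin k) : unfoldAux n T j = modeUnfold j T := by
  ext x c
  refine congrArg T (funext fun l => ?_)
  by_cases h : l = j
  · subst h; rfl
  · simp [h, Equiv.piSplitAt]

theorem dotProduct_mulVec_self_le_of_isSymm_of_mul_self {m : Type*} [Fintype m]
    {B : Matrix m m ℝ} (hsymm : B.IsSymm) (hidem : B * B = B) (v : m → ℝ) :
    B *ᵥ v ⬝ᵥ B *ᵥ v ≤ v ⬝ᵥ v := by
  set w := B *ᵥ v
  have hw : w ⬝ᵥ w = w ⬝ᵥ v := by
    conv_lhs => rw [dotProduct_mulVec, ← mulVec_transpose, hsymm.eq, mulVec_mulVec, hidem]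
  have hnonneg : 0 ≤ (v - w) ⬝ᵥ (v - w) := dotProduct_self_star_nonneg _
  simp only [sub_dotProduct, dotProduct_sub, dotProduct_comm v w] at hnonneg
  linarith

theorem sum_sq_mul_le_of_isSymm_of_mul_self {m n : Type*} [Fintype m] [Fintype n]
    {B : Matrix m m ℝ} (hsymm : B.IsSymm) (hidem : B * B = B) (M : Matrix m n ℝ) :
    ∑ x, ∑ c, (B * M) x c ^ 2 ≤ ∑ x, ∑ c, M x c ^ 2 := by
  rw [Finset.sum_comm, Finset.sum_comm (f := fun x c => M x c ^ 2)]
  refine Finset.sum_le_sum fun c _ => ?_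
  simpa only [dotProduct, sq, mulVec, mul_apply, transpose_apply] using
    dotProduct_mulVec_self_le_of_isSymm_of_mul_self hsymm hidem (Mᵀ c)

noncomputable def frobNorm {α : Type*} [Fintype α] (T : α → ℝ) : ℝ :=
  √(∑ a, T a ^ 2)

theorem frobNorm_add_le {α : Type*} [Fintype α] (T U : α → ℝ) :
    frobNorm (T + U) ≤ frobNorm T + frobNorm U := by
  have hnorm : ∀ V : α → ℝ, frobNorm V = ‖WithLp.toLp 2 V‖ := fun V => by
    simp [frobNorm, EuclideanSpace.norm_eq]
  simpa only [hnorm, WithLp.toLp_add] using norm_add_le (WithLp.toLp 2 T) (WithLp.toLp 2 U)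

theorem frobNorm_eq_sqrt_sum_sq_modeUnfold {ι : Type*} [Fintype ι] [DecidableEq ι]
    {κ : ι → Type*} [∀ i, Fintype (κ i)] (j : ι) (T : (∀ i, κ i) → ℝ) :
    frobNorm T = √(∑ x, ∑ c, modeUnfold j T x c ^ 2) := by
  rw [sum_sq_modeUnfold, frobNorm]

section Telescoping

variable {ι : Type*} [Fintype ι] [DecidableEq ι] {κ : ι → Type*} [∀ i, Fintype (κ i)]
  [∀ i, DecidableEq (κ i)]

theorem frobNorm_kroneckerPi_mulSingle_mulVec_le {j : ι} {B : Matrix (κ j) (κ j) ℝ}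
    (hsymm : B.IsSymm) (hidem : B * B = B) (T : (∀ i, κ i) → ℝ) :
    frobNorm (kroneckerPi (Pi.mulSingle j B) *ᵥ T) ≤ frobNorm T := by
  rw [frobNorm_eq_sqrt_sum_sq_modeUnfold j, frobNorm_eq_sqrt_sum_sq_modeUnfold j T,
    modeUnfold_kroneckerPi_mulSingle_mulVec]
  exact Real.sqrt_le_sqrt (sum_sq_mul_le_of_isSymm_of_mul_self hsymm hidem _)

theorem frobNorm_sub_kroneckerPi_piecewise_le (Q : ∀ i, Matrix (κ i) (κ i) ℝ)
    (hsymm : ∀ i, (Q i).IsSymm) (hidem : ∀ i, Q i * Q i = Q i) (T : (∀ i, κ i) → ℝ)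
    (S : Finset ι) :
    frobNorm (T - kroneckerPi (S.piecewise Q 1) *ᵥ T)
      ≤ ∑ j ∈ S, frobNorm (T - kroneckerPi (Pi.mulSingle j (Q j)) *ᵥ T) := by
  induction S using Finset.induction_on with
  | empty => simp [kroneckerPi_one, frobNorm]
  | @insert j S hj ih =>
    set M := kroneckerPi (Pi.mulSingle j (Q j))
    set P := kroneckerPi (S.piecewise Q 1)
    have hsplit : T - kroneckerPi ((insert j S).piecewise Q 1) *ᵥ T
        = (T - M *ᵥ T) + M *ᵥ (T - P *ᵥ T) := by
      rw [piecewise_insert_one_eq_mulSingle_mul Q hj, kroneckerPi_mul, ← mulVec_mulVec,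
        mulVec_sub]
      abel
    calc frobNorm (T - kroneckerPi ((insert j S).piecewise Q 1) *ᵥ T)
        ≤ frobNorm (T - M *ᵥ T) + frobNorm (M *ᵥ (T - P *ᵥ T)) := by
          rw [hsplit]
          exact frobNorm_add_le _ _
      _ ≤ frobNorm (T - M *ᵥ T) + frobNorm (T - P *ᵥ T) := by
          gcongr
          exact frobNorm_kroneckerPi_mulSingle_mulVec_le (hsymm j) (hidem j) _
      _ ≤ ∑ i ∈ insert j S, frobNorm (T - kroneckerPi (Pi.mulSingle i (Q i)) *ᵥ T) := by
          rw [Finset.sum_insert hj]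
          gcongr

end Telescoping

/-- For orthogonal projections `Q^{(1)}, …, Q^{(k)}` and
`T* = T ×₁ Q^{(1)} ×₂ ⋯ ×ₖ Q^{(k)}`, a telescoping argument gives
`‖T − T*‖_F ≤ ∑_j ‖(I − Q^{(j)}) unfold_j(T)‖_F`. -/
theorem tensor_projection_telescoping {k : ℕ} (n : Fin k → ℕ)
    (T : ((j : Fin k) → Fin (n j)) → ℝ)
    (Q : (j : Fin k) → Matrix (Fin (n j)) (Fin (n j)) ℝ)
    (hsym : ∀ j, (Q j).IsSymm) (hproj : ∀ j, Q j * Q j = Q j) :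
    Real.sqrt (∑ i : (j : Fin k) → Fin (n j),
        (T i - ∑ c : (j : Fin k) → Fin (n j), (∏ j, Q j (i j) (c j)) * T c) ^ 2)
      ≤ ∑ j, Real.sqrt (∑ i : Fin (n j), ∑ c : (l : {l : Fin k // l ≠ j}) → Fin (n l.1),
          ((((1 - Q j) * unfoldAux n T j : Matrix (Fin (n j)) ((l : {l : Fin k // l ≠ j}) → Fin (n l.1)) ℝ)) i c) ^ 2) := by
  have hunfold : ∀ j, modeUnfold j (T - kroneckerPi (Pi.mulSingle j (Q j)) *ᵥ T)
      = (1 - Q j) * unfoldAux n T j := fun j => by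
    rw [modeUnfold_sub, modeUnfold_kroneckerPi_mulSingle_mulVec, unfoldAux_eq_modeUnfold,
      Matrix.sub_mul, Matrix.one_mul]
  have htel := frobNorm_sub_kroneckerPi_piecewise_le Q hsym hproj T univ
  rw [Finset.piecewise_univ] at htel
  refine htel.trans_eq (Finset.sum_congr rfl fun j _ => ?_)
  rw [frobNorm_eq_sqrt_sum_sq_modeUnfold j, hunfold]
end
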